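/- arXiv:2410.06322 — 3 statements merged into one kernel-verified Lean document; each statement's English description precedes it below -/
import Mathlib

section
/- Let (Ω, μ) be a measure space and n ≥ 1. There exists a constant C > 0 such that for all f, g ∈ L^{4/3}(Ω, μ; ℝⁿ), the fields Φ(f) and Φ(g) belong to L⁴(Ω, μ; ℝⁿ) and ‖Φ(f) − Φ(g)‖_{L⁴} ≤ C ‖f − g‖_{L^{4/3}}^{1/3}. -/
/-!
For `0 < p ≤ 1` the map `Φₚ x = ‖x‖ ^ (p - 1) • x` on a real normed space is `p`-Hölder with
constant `2`. With `‖y‖ ≤ ‖x‖`: if `‖x‖ ≤ ‖x - y‖`, both images have norm at most `‖x - y‖ ^ p`;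
otherwise `Φₚ x - Φₚ y = ‖x‖ ^ (p - 1) • (x - y) + (‖x‖ ^ (p - 1) - ‖y‖ ^ (p - 1)) • y`, and each
term is bounded by `‖x - y‖ ^ p`. Integrating the pointwise bound in `L^{q/p}` turns `‖f - g‖ ^ p`
into `‖f - g‖_{L^q} ^ p`; `Phi` is `Φ_{1/3}` and `q = 4/3`.
-/

open MeasureTheory
open scoped ENNReal

/-- The duality map `Φ(x) = ‖x‖^{-2/3} x`, with `Φ(0) = 0`. -/
noncomputable def Phi {n : ℕ} (x : EuclideanSpace ℝ (Fin n)) : EuclideanSpace ℝ (Fin n) :=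
  (‖x‖ ^ (-(2 : ℝ) / 3)) • x

open Filter Topology

namespace Real

theorem rpow_sub_one_mul_le_rpow {a d p : ℝ} (hd : 0 ≤ d) (hda : d ≤ a) (hp : p ≤ 1) :
    a ^ (p - 1) * d ≤ d ^ p := by
  rcases hd.eq_or_lt with rfl | hd
  · simpa using rpow_nonneg le_rfl p
  calc a ^ (p - 1) * d ≤ d ^ (p - 1) * d :=
        mul_le_mul_of_nonneg_right (rpow_le_rpow_of_nonpos hd hda (by linarith)) hd.le
    _ = d ^ p := by rw [rpow_sub_one hd.ne', div_mul_cancel₀ _ hd.ne']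

theorem abs_rpow_sub_one_sub_rpow_sub_one_mul_le {a b p : ℝ} (hb : 0 ≤ b) (hba : b ≤ a)
    (hp0 : 0 ≤ p) (hp1 : p ≤ 1) : |a ^ (p - 1) - b ^ (p - 1)| * b ≤ (a - b) ^ p := by
  rcases hb.eq_or_lt with rfl | hb
  · simpa using rpow_nonneg (by linarith) p
  have ha : 0 < a := hb.trans_le hba
  have hmono : a ^ (p - 1) ≤ b ^ (p - 1) := rpow_le_rpow_of_nonpos hb hba (by linarith)
  calc |a ^ (p - 1) - b ^ (p - 1)| * b = b ^ p - a ^ (p - 1) * b := by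
        rw [abs_of_nonpos (sub_nonpos.2 hmono), rpow_sub_one hb.ne']
        field_simp
        ring
    _ ≤ a ^ p - a ^ (p - 1) * b := by gcongr
    _ = a ^ (p - 1) * (a - b) := by
        rw [rpow_sub_one ha.ne']
        field_simp
    _ ≤ (a - b) ^ p := rpow_sub_one_mul_le_rpow (by linarith) (by linarith) hp1

end Real

section NormRpowSMul

variable {E : Type*} [NormedAddCommGroup E] [NormedSpace ℝ E] {p : ℝ}

noncomputable def normRpowSMul (p : ℝ) (x : E) : E := ‖x‖ ^ (p - 1) • x

theorem norm_normRpowSMul (hp : p ≠ 0) (x : E) : ‖normRpowSMul p x‖ = ‖x‖ ^ p := by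
  rcases eq_or_ne x 0 with rfl | hx
  · simp [normRpowSMul, Real.zero_rpow hp]
  · rw [normRpowSMul, norm_smul, Real.norm_of_nonneg (by positivity),
      Real.rpow_sub_one (norm_ne_zero_iff.2 hx), div_mul_cancel₀ _ (norm_ne_zero_iff.2 hx)]

theorem norm_normRpowSMul_sub_le_of_norm_le (hp0 : 0 < p) (hp1 : p ≤ 1) {x y : E}
    (hyx : ‖y‖ ≤ ‖x‖) : ‖normRpowSMul p x - normRpowSMul p y‖ ≤ 2 * ‖x - y‖ ^ p := by
  rcases lt_or_ge ‖x - y‖ ‖x‖ with hdx | hxd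
  · have hsplit : normRpowSMul p x - normRpowSMul p y =
        ‖x‖ ^ (p - 1) • (x - y) + (‖x‖ ^ (p - 1) - ‖y‖ ^ (p - 1)) • y := by
      simp only [normRpowSMul]
      module
    have hnorm : ‖x‖ - ‖y‖ ≤ ‖x - y‖ := norm_sub_norm_le x y
    calc ‖normRpowSMul p x - normRpowSMul p y‖
        ≤ ‖x‖ ^ (p - 1) * ‖x - y‖ + |‖x‖ ^ (p - 1) - ‖y‖ ^ (p - 1)| * ‖y‖ := by
          rw [hsplit]
          refine (norm_add_le _ _).trans_eq ?_
          rw [norm_smul, norm_smul, Real.norm_of_nonneg (by positivity), Real.norm_eq_abs]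
      _ ≤ ‖x - y‖ ^ p + (‖x‖ - ‖y‖) ^ p := by
          gcongr
          · exact Real.rpow_sub_one_mul_le_rpow (norm_nonneg _) hdx.le hp1
          · exact Real.abs_rpow_sub_one_sub_rpow_sub_one_mul_le (norm_nonneg _) hyx hp0.le hp1
      _ ≤ 2 * ‖x - y‖ ^ p := by
          have : (‖x‖ - ‖y‖) ^ p ≤ ‖x - y‖ ^ p :=
            Real.rpow_le_rpow (by linarith) hnorm hp0.le
          linarith
  · calc ‖normRpowSMul p x - normRpowSMul p y‖
        ≤ ‖normRpowSMul p x‖ + ‖normRpowSMul p y‖ := norm_sub_le _ _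
      _ = ‖x‖ ^ p + ‖y‖ ^ p := by rw [norm_normRpowSMul hp0.ne', norm_normRpowSMul hp0.ne']
      _ ≤ ‖x - y‖ ^ p + ‖x - y‖ ^ p := by gcongr; exact hyx.trans hxd
      _ = 2 * ‖x - y‖ ^ p := by ring

theorem norm_normRpowSMul_sub_le (hp0 : 0 < p) (hp1 : p ≤ 1) (x y : E) :
    ‖normRpowSMul p x - normRpowSMul p y‖ ≤ 2 * ‖x - y‖ ^ p := by
  rcases le_total ‖y‖ ‖x‖ with hyx | hxy
  · exact norm_normRpowSMul_sub_le_of_norm_le hp0 hp1 hyx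
  · rw [norm_sub_rev, norm_sub_rev x]
    exact norm_normRpowSMul_sub_le_of_norm_le hp0 hp1 hxy

theorem continuous_normRpowSMul (hp0 : 0 < p) (hp1 : p ≤ 1) :
    Continuous (normRpowSMul p : E → E) := by
  refine continuous_iff_continuousAt.2 fun x => tendsto_iff_norm_sub_tendsto_zero.2 ?_
  refine squeeze_zero (fun _ => norm_nonneg _) (fun y => norm_normRpowSMul_sub_le hp0 hp1 y x) ?_
  have hdist : Tendsto (fun y => ‖y - x‖) (𝓝 x) (𝓝 0) :=
    tendsto_iff_norm_sub_tendsto_zero.1 tendsto_id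
  simpa [Real.zero_rpow hp0.ne'] using (hdist.rpow_const (Or.inr hp0.le)).const_mul 2

end NormRpowSMul

section Lp

variable {Ω E : Type*} [MeasurableSpace Ω] {μ : Measure Ω} [NormedAddCommGroup E]
  [NormedSpace ℝ E] {p : ℝ} {q : ℝ≥0∞}

theorem MeasureTheory.MemLp.normRpowSMul (hp0 : 0 < p) (hp1 : p ≤ 1) {f : Ω → E}
    (hf : MemLp f q μ) : MemLp (fun x => normRpowSMul p (f x)) (q / ENNReal.ofReal p) μ := by
  have h := hf.norm_rpow_div (ENNReal.ofReal p)
  rw [ENNReal.toReal_ofReal hp0.le] at h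
  refine h.of_le ((continuous_normRpowSMul hp0 hp1).comp_aestronglyMeasurable hf.1) ?_
  filter_upwards with x
  rw [norm_normRpowSMul hp0.ne', Real.norm_of_nonneg (by positivity)]

theorem eLpNorm_normRpowSMul_sub_le (hp0 : 0 < p) (hp1 : p ≤ 1) (f g : Ω → E) :
    eLpNorm (fun x => normRpowSMul p (f x) - normRpowSMul p (g x)) (q / ENNReal.ofReal p) μ ≤
      2 * eLpNorm (f - g) q μ ^ p := by
  calc _ ≤ ENNReal.ofReal 2 * eLpNorm (fun x => ‖(f - g) x‖ ^ p) (q / ENNReal.ofReal p) μ := by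
        refine eLpNorm_le_mul_eLpNorm_of_ae_le_mul (Eventually.of_forall fun x => ?_) _
        rw [Real.norm_of_nonneg (by positivity)]
        exact norm_normRpowSMul_sub_le hp0 hp1 (f x) (g x)
    _ = 2 * eLpNorm (f - g) q μ ^ p := by
        rw [eLpNorm_norm_rpow _ hp0, ENNReal.div_mul_cancel (by simpa using hp0) (by simp),
          ENNReal.ofReal_ofNat]

end Lp

theorem Phi_eq_normRpowSMul {n : ℕ} :
    (Phi : EuclideanSpace ℝ (Fin n) → EuclideanSpace ℝ (Fin n)) = normRpowSMul (1 / 3) := by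
  funext x
  norm_num [Phi, normRpowSMul]

theorem duality_map_Lp_continuity_general
    {Ω : Type*} [MeasurableSpace Ω] (μ : Measure Ω) (n : ℕ) :
    ∃ C : ℝ, 0 < C ∧ ∀ f g : Ω → EuclideanSpace ℝ (Fin n),
      MemLp f (4 / 3) μ → MemLp g (4 / 3) μ →
      MemLp (fun x => Phi (f x)) 4 μ ∧ MemLp (fun x => Phi (g x)) 4 μ ∧
      (eLpNorm (fun x => Phi (f x) - Phi (g x)) 4 μ).toReal ≤
        C * (eLpNorm (f - g) (4 / 3) μ).toReal ^ ((1 : ℝ) / 3) := by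
  have hp0 : (0 : ℝ) < 1 / 3 := by norm_num
  have hp1 : (1 : ℝ) / 3 ≤ 1 := by norm_num
  have hexp : (4 / 3 : ℝ≥0∞) / ENNReal.ofReal (1 / 3) = 4 := by
    rw [one_div, ENNReal.ofReal_inv_of_pos three_pos, ENNReal.ofReal_ofNat,
      ENNReal.div_eq_inv_mul, inv_inv, ENNReal.mul_div_cancel (by norm_num) (by norm_num)]
  refine ⟨2, two_pos, fun f g hf hg => ?_⟩
  have hPhi_f := hf.normRpowSMul hp0 hp1
  have hPhi_g := hg.normRpowSMul hp0 hp1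
  have hbound := eLpNorm_normRpowSMul_sub_le (μ := μ) (q := 4 / 3) hp0 hp1 f g
  rw [hexp, ← Phi_eq_normRpowSMul] at hPhi_f hPhi_g hbound
  refine ⟨hPhi_f, hPhi_g, ?_⟩
  have hfin : eLpNorm (f - g) (4 / 3) μ ^ ((1 : ℝ) / 3) ≠ ∞ :=
    ENNReal.rpow_ne_top_of_nonneg hp0.le (hf.sub hg).eLpNorm_ne_top
  calc _ ≤ (2 * eLpNorm (f - g) (4 / 3) μ ^ ((1 : ℝ) / 3)).toReal :=
        ENNReal.toReal_mono (ENNReal.mul_ne_top (by simp) hfin) hbound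
    _ = _ := by rw [ENNReal.toReal_mul, ENNReal.toReal_rpow]; simp

/-- There is `C > 0` such that for all `f, g ∈ L^{4/3}`, the fields
`Φ(f)` and `Φ(g)` belong to `L⁴` and `‖Φ(f) - Φ(g)‖_{L⁴} ≤ C ‖f - g‖_{L^{4/3}}^{1/3}`. -/
theorem duality_map_Lp_continuity
    {Ω : Type*} [MeasurableSpace Ω] (μ : Measure Ω) (n : ℕ) (hn : 1 ≤ n) :
    ∃ C : ℝ, 0 < C ∧ ∀ f g : Ω → EuclideanSpace ℝ (Fin n),
      MemLp f (4 / 3) μ → MemLp g (4 / 3) μ →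
      MemLp (fun x => Phi (f x)) 4 μ ∧ MemLp (fun x => Phi (g x)) 4 μ ∧
      (eLpNorm (fun x => Phi (f x) - Phi (g x)) 4 μ).toReal ≤
        C * (eLpNorm (f - g) (4 / 3) μ).toReal ^ ((1 : ℝ) / 3) :=
  duality_map_Lp_continuity_general μ n
end

section
/- Let n ≥ 1. There exists a constant c > 0 such that for all x, y ∈ ℝⁿ, ((Φ(x) − Φ(y)) · (x − y)) · (‖x‖ + ‖y‖)^{2/3} ≥ c ‖x − y‖², where Φ(x) := ‖x‖^{−2/3} x with the convention Φ(0) = 0. In particular Φ is monotone: (Φ(x) − Φ(y)) · (x − y) ≥ 0 for all x, y. -/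
open scoped InnerProductSpace

private lemma cube_root_le' {x y : ℝ} (hx : 0 ≤ x) (h : x ^ 3 ≤ y ^ 3) : x ≤ y := by
  by_contra h'
  push_neg at h'
  have hy : 0 ≤ y := by
    by_contra hy'
    push_neg at hy'
    have h1 : 0 < (-y) ^ 3 := pow_pos (by linarith) 3
    have h2 : (0:ℝ) ≤ x ^ 3 := pow_nonneg hx 3
    nlinarith
  have := pow_lt_pow_left₀ h' hy (n := 3) (by norm_num)
  linarith

set_option maxHeartbeats 1000000 in
private lemma key_poly (α β u v w s : ℝ) (hu : 0 < u) (hv : 0 < v) (hw : 0 < w)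
    (hα : α * u ^ 2 = 1) (hβ : β * v ^ 2 = 1) (hww : w ^ 3 = u ^ 3 + v ^ 3)
    (hs : |s| ≤ u ^ 3 * v ^ 3) :
    (1/3 : ℝ) * ((u^3) ^ 2 - 2 * s + (v^3) ^ 2) ≤
      (α * (u^3) ^ 2 + β * (v^3) ^ 2 - (α + β) * s) * w ^ 2 := by
  have hwu : u ≤ w := cube_root_le' hu.le (by rw [hww]; nlinarith [pow_pos hv 3])
  have hwv : v ≤ w := cube_root_le' hv.le (by rw [hww]; nlinarith [pow_pos hu 3])
  have hwuv : w ≤ u + v := by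
    apply cube_root_le' hw.le
    rw [hww]
    nlinarith [mul_pos hu hv, hu.le, hv.le]
  have g1 : 0 ≤ (u^4 + v^4 - u*v^3 - u^3*v) * w^2 - (1/3) * (u^3 - v^3)^2 := by
    have h3 : u^2 + u*v + v^2 ≤ 3 * w^2 := by
      nlinarith [mul_le_mul hwu hwu hu.le hw.le, mul_le_mul hwv hwv hv.le hw.le,
        mul_le_mul hwu hwv hv.le hw.le]
    nlinarith [mul_nonneg (mul_nonneg (sq_nonneg (u - v))
      (by positivity : (0:ℝ) ≤ u^2 + u*v + v^2)) (by linarith : (0:ℝ) ≤ 3*w^2 - (u^2 + u*v + v^2))]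
  have g2 : 0 ≤ (u^4 + v^4 + u*v^3 + u^3*v) * w^2 - (1/3) * (u^3 + v^3)^2 := by
    have e : (u^4 + v^4 + u*v^3 + u^3*v) * w^2 = (u + v) * w^5 := by
      linear_combination (-(u + v) * w^2) * hww
    have f : (u^3 + v^3)^2 = w^6 := by linear_combination (-(u^3 + v^3 + w^3)) * hww
    rw [e, f]
    nlinarith [mul_nonneg (pow_nonneg hw.le 5) (sub_nonneg.2 hwuv), pow_nonneg hw.le 6]
  obtain ⟨hs2, hs1⟩ := abs_le.mp hs
  have hm : (0:ℝ) < u^3 * v^3 := by positivity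
  have habs : (α + β) * (u^3 * v^3) * (s * w^2) = (u*v^3 + u^3*v) * (s * w^2) := by
    linear_combination (s * w^2 * u * v^3) * hα + (s * w^2 * u^3 * v) * hβ
  have e1 : α * (u^3) ^ 2 = u^4 := by linear_combination u^4 * hα
  have e2 : β * (v^3) ^ 2 = v^4 := by linear_combination v^4 * hβ
  rw [e1, e2]
  nlinarith [mul_nonneg (by linarith : (0:ℝ) ≤ u^3*v^3 - s) g2,
    mul_nonneg (by linarith : (0:ℝ) ≤ u^3*v^3 + s) g1, habs, hm]

private lemma key_real (a b s : ℝ) (ha : 0 ≤ a) (hb : 0 ≤ b) (hs : |s| ≤ a * b) :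
    (1/3 : ℝ) * (a ^ 2 - 2 * s + b ^ 2) ≤
      (a ^ (-(2:ℝ)/3) * a ^ 2 + b ^ (-(2:ℝ)/3) * b ^ 2
        - (a ^ (-(2:ℝ)/3) + b ^ (-(2:ℝ)/3)) * s) * (a + b) ^ ((2:ℝ)/3) := by
  have hne : (-(2:ℝ)/3) ≠ 0 := by norm_num
  rcases ha.lt_or_eq with ha0 | ha0
  · rcases hb.lt_or_eq with hb0 | hb0
    · -- main case a > 0, b > 0
      obtain ⟨u, hu, hu3, hα⟩ :
          ∃ u : ℝ, 0 < u ∧ u ^ 3 = a ∧ a ^ (-(2:ℝ)/3) * u ^ 2 = 1 := by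
        refine ⟨a ^ ((1:ℝ)/3), Real.rpow_pos_of_pos ha0 _, ?_, ?_⟩
        · rw [← Real.rpow_natCast (a ^ ((1:ℝ)/3)) 3, ← Real.rpow_mul ha]; norm_num
        · rw [← Real.rpow_natCast (a ^ ((1:ℝ)/3)) 2, ← Real.rpow_mul ha,
            ← Real.rpow_add ha0]; norm_num
      obtain ⟨v, hv, hv3, hβ⟩ :
          ∃ v : ℝ, 0 < v ∧ v ^ 3 = b ∧ b ^ (-(2:ℝ)/3) * v ^ 2 = 1 := by
        refine ⟨b ^ ((1:ℝ)/3), Real.rpow_pos_of_pos hb0 _, ?_, ?_⟩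
        · rw [← Real.rpow_natCast (b ^ ((1:ℝ)/3)) 3, ← Real.rpow_mul hb]; norm_num
        · rw [← Real.rpow_natCast (b ^ ((1:ℝ)/3)) 2, ← Real.rpow_mul hb,
            ← Real.rpow_add hb0]; norm_num
      obtain ⟨w, hw, hw3, hw2⟩ :
          ∃ w : ℝ, 0 < w ∧ w ^ 3 = a + b ∧ (a + b) ^ ((2:ℝ)/3) = w ^ 2 := by
        have hab : (0:ℝ) ≤ a + b := by linarith
        refine ⟨(a + b) ^ ((1:ℝ)/3), Real.rpow_pos_of_pos (by linarith) _, ?_, ?_⟩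
        · rw [← Real.rpow_natCast ((a + b) ^ ((1:ℝ)/3)) 3, ← Real.rpow_mul hab]; norm_num
        · rw [← Real.rpow_natCast ((a + b) ^ ((1:ℝ)/3)) 2, ← Real.rpow_mul hab]; norm_num
      rw [← hu3] at hα hw3 hw2 hs ⊢
      rw [← hv3] at hβ hw3 hw2 hs ⊢
      rw [hw2]
      exact key_poly _ _ u v w s hu hv hw hα hβ hw3 hs
    · -- b = 0
      have hs0 : s = 0 := by
        have h0 : |s| ≤ 0 := by rw [← hb0] at hs; simpa using hs
        exact abs_eq_zero.mp (le_antisymm h0 (abs_nonneg s))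
      rw [← hb0, hs0]
      simp only [Real.zero_rpow hne, zero_mul, mul_zero, add_zero, sub_zero,
        ne_eq, OfNat.ofNat_ne_zero, not_false_eq_true, zero_pow]
      have e : a ^ (-(2:ℝ)/3) * a ^ 2 * a ^ ((2:ℝ)/3) = a ^ 2 := by
        rw [← Real.rpow_natCast a 2, ← Real.rpow_add ha0, ← Real.rpow_add ha0]
        norm_num
      nlinarith [e, sq_nonneg a]
  · -- a = 0
    have hs0 : s = 0 := by
      have h0 : |s| ≤ 0 := by rw [← ha0] at hs; simpa using hs
      exact abs_eq_zero.mp (le_antisymm h0 (abs_nonneg s))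
    rw [← ha0, hs0]
    simp only [Real.zero_rpow hne, zero_mul, mul_zero, add_zero, sub_zero, zero_add,
      ne_eq, OfNat.ofNat_ne_zero, not_false_eq_true, zero_pow, zero_sub, neg_zero, zero_mul]
    rcases hb.lt_or_eq with hb0 | hb0
    · have e : b ^ (-(2:ℝ)/3) * b ^ 2 * b ^ ((2:ℝ)/3) = b ^ 2 := by
        rw [← Real.rpow_natCast b 2, ← Real.rpow_add hb0, ← Real.rpow_add hb0]
        norm_num
      nlinarith [e, sq_nonneg b]
    · rw [← hb0]
      simp [Real.zero_rpow hne]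

private lemma strong_mono {n : ℕ} (x y : EuclideanSpace ℝ (Fin n)) :
    (1/3 : ℝ) * ‖x - y‖ ^ 2 ≤ (⟪Phi x - Phi y, x - y⟫_ℝ) * (‖x‖ + ‖y‖) ^ ((2:ℝ)/3) := by
  have hinner : ⟪Phi x - Phi y, x - y⟫_ℝ =
      ‖x‖ ^ (-(2:ℝ)/3) * ‖x‖ ^ 2 + ‖y‖ ^ (-(2:ℝ)/3) * ‖y‖ ^ 2
        - (‖x‖ ^ (-(2:ℝ)/3) + ‖y‖ ^ (-(2:ℝ)/3)) * ⟪x, y⟫_ℝ := by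
    simp only [Phi, inner_sub_left, inner_sub_right, real_inner_smul_left,
      real_inner_self_eq_norm_sq, real_inner_comm y x]
    ring
  have hnorm : ‖x - y‖ ^ 2 = ‖x‖ ^ 2 - 2 * ⟪x, y⟫_ℝ + ‖y‖ ^ 2 := norm_sub_sq_real x y
  rw [hinner, hnorm]
  exact key_real ‖x‖ ‖y‖ ⟪x, y⟫_ℝ (norm_nonneg x) (norm_nonneg y) (abs_real_inner_le_norm x y)

/-- There is `c > 0` such that
`((Φ x - Φ y) · (x - y)) (‖x‖ + ‖y‖)^{2/3} ≥ c ‖x - y‖²` for all `x, y`; in particular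
`Φ` is monotone: `(Φ x - Φ y) · (x - y) ≥ 0`. -/
theorem duality_map_strong_monotonicity (n : ℕ) (hn : 1 ≤ n) :
    (∃ c : ℝ, 0 < c ∧ ∀ x y : EuclideanSpace ℝ (Fin n),
      c * ‖x - y‖ ^ 2 ≤ (⟪Phi x - Phi y, x - y⟫_ℝ) * (‖x‖ + ‖y‖) ^ ((2 : ℝ) / 3)) ∧
    (∀ x y : EuclideanSpace ℝ (Fin n), 0 ≤ ⟪Phi x - Phi y, x - y⟫_ℝ) := by
  constructor
  · exact ⟨1/3, by norm_num, fun x y => strong_mono x y⟩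
  · intro x y
    rcases eq_or_ne x y with rfl | hne
    · simp
    · have h1 : 0 < ‖x - y‖ := by
        rw [norm_pos_iff]
        exact sub_ne_zero.mpr hne
      have hpos : 0 < ‖x‖ + ‖y‖ := by
        by_contra h
        push_neg at h
        have hx0 : ‖x‖ = 0 := le_antisymm (by linarith [norm_nonneg y]) (norm_nonneg x)
        have hy0 : ‖y‖ = 0 := le_antisymm (by linarith [norm_nonneg x]) (norm_nonneg y)
        exact hne (by rw [norm_eq_zero.mp hx0, norm_eq_zero.mp hy0])
      have hr : 0 < (‖x‖ + ‖y‖) ^ ((2:ℝ)/3) := Real.rpow_pos_of_pos hpos _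
      nlinarith [strong_mono x y, pow_pos h1 2, hr]
end

section
/- Let (Ω, μ) be a measure space and n ≥ 1. There exists a constant C > 0 such that for all f, g ∈ L^{4/3}(Ω, μ; ℝⁿ), ( ‖f‖_{L^{4/3}}^{2/3} + ‖g‖_{L^{4/3}}^{2/3} ) · ∫_Ω (Φ(f) − Φ(g)) · (f − g) dμ ≥ C ‖f − g‖_{L^{4/3}}². -/
open MeasureTheory
open scoped InnerProductSpace ENNReal

/-!
Put `u = Φ x`, `v = Φ y`; then `x = ‖u‖² u` and `y = ‖v‖² v`, so with `s = ‖u‖`, `r = ‖v‖`,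
`c = ⟪u, v⟫` both `‖x - y‖²` and `⟪Φ x - Φ y, x - y⟫` are polynomials in `s, r, c`, affine in
`c ≤ s r`. Checking the endpoint `c = s r` gives the pointwise estimate
`‖x - y‖² ≤ 3 (‖x‖ + ‖y‖)^{2/3} ⟪Φ x - Φ y, x - y⟫`. Taking square roots and applying Hölder with
exponents `2` and `4` yields
`‖f - g‖_{4/3} ≤ (3 ∫ ⟪Φ f - Φ g, f - g⟫)^{1/2} ‖|f| + |g|‖_{4/3}^{1/3}`, and Minkowski together
with the subadditivity of `t ↦ t^{2/3}` gives the claim with `C = 1/3`.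
-/

theorem sextic_le_three_mul {s r c P : ℝ} (hc : c ≤ s * r) (hs : s ^ 2 ≤ P) (hr : r ^ 2 ≤ P) :
    s ^ 6 + r ^ 6 - 2 * s ^ 2 * r ^ 2 * c ≤ 3 * P * (s ^ 4 + r ^ 4 - (s ^ 2 + r ^ 2) * c) := by
  have hP : 0 ≤ 3 * P - (s ^ 2 + s * r + r ^ 2) := by nlinarith [sq_nonneg (s - r)]
  have hB : 0 ≤ 3 * P * (s ^ 2 + r ^ 2) - 2 * s ^ 2 * r ^ 2 := by
    nlinarith [mul_le_mul_of_nonneg_right hs (sq_nonneg r), sq_nonneg s, sq_nonneg r]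
  have hQ : 0 ≤ s ^ 2 + s * r + r ^ 2 := by nlinarith [sq_nonneg (s + r), sq_nonneg s, sq_nonneg r]
  linear_combination
    mul_nonneg (mul_nonneg (sq_nonneg (s - r)) hQ) hP + mul_nonneg (sub_nonneg.2 hc) hB

theorem sq_le_rpow_two_thirds_add (a b : ℝ) (ha : 0 ≤ a) (hb : 0 ≤ b) :
    a ^ 2 ≤ (a ^ 3 + b ^ 3) ^ ((2 : ℝ) / 3) := by
  calc a ^ 2 = (a ^ 3) ^ ((2 : ℝ) / 3) := by
        rw [← Real.rpow_natCast a 3, ← Real.rpow_mul ha]; norm_num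
    _ ≤ (a ^ 3 + b ^ 3) ^ ((2 : ℝ) / 3) :=
        Real.rpow_le_rpow (by positivity) (le_add_of_nonneg_right (by positivity)) (by norm_num)

section InnerProductSpace

variable {E : Type*} [NormedAddCommGroup E] [InnerProductSpace ℝ E]

theorem inner_sub_norm_sq_smul_sub_eq (u v : E) :
    ⟪u - v, ‖u‖ ^ 2 • u - ‖v‖ ^ 2 • v⟫_ℝ =
      ‖u‖ ^ 4 + ‖v‖ ^ 4 - (‖u‖ ^ 2 + ‖v‖ ^ 2) * ⟪u, v⟫_ℝ := by
  simp only [inner_sub_left, inner_sub_right, real_inner_smul_right, real_inner_self_eq_norm_sq,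
    real_inner_comm u v]
  ring

theorem norm_norm_sq_smul_sub_sq_eq (u v : E) :
    ‖‖u‖ ^ 2 • u - ‖v‖ ^ 2 • v‖ ^ 2 = ‖u‖ ^ 6 + ‖v‖ ^ 6 - 2 * ‖u‖ ^ 2 * ‖v‖ ^ 2 * ⟪u, v⟫_ℝ := by
  rw [norm_sub_sq_real, norm_smul, norm_smul, real_inner_smul_left, real_inner_smul_right]
  simp only [norm_pow, norm_norm]
  ring

theorem inner_sub_norm_sq_smul_sub_nonneg (u v : E) :
    0 ≤ ⟪u - v, ‖u‖ ^ 2 • u - ‖v‖ ^ 2 • v⟫_ℝ := by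
  rw [inner_sub_norm_sq_smul_sub_eq]
  have hc : (‖u‖ ^ 2 + ‖v‖ ^ 2) * ⟪u, v⟫_ℝ ≤ (‖u‖ ^ 2 + ‖v‖ ^ 2) * (‖u‖ * ‖v‖) :=
    mul_le_mul_of_nonneg_left (real_inner_le_norm u v) (by positivity)
  have hQ : 0 ≤ ‖u‖ ^ 2 + ‖u‖ * ‖v‖ + ‖v‖ ^ 2 := by positivity
  linear_combination mul_nonneg (sq_nonneg (‖u‖ - ‖v‖)) hQ + hc

theorem norm_norm_sq_smul_sub_sq_le (u v : E) :
    ‖‖u‖ ^ 2 • u - ‖v‖ ^ 2 • v‖ ^ 2 ≤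
      3 * (‖u‖ ^ 3 + ‖v‖ ^ 3) ^ ((2 : ℝ) / 3) * ⟪u - v, ‖u‖ ^ 2 • u - ‖v‖ ^ 2 • v⟫_ℝ := by
  rw [norm_norm_sq_smul_sub_sq_eq, inner_sub_norm_sq_smul_sub_eq]
  exact sextic_le_three_mul (real_inner_le_norm u v)
    (sq_le_rpow_two_thirds_add _ _ (norm_nonneg u) (norm_nonneg v))
    (add_comm (‖u‖ ^ 3) _ ▸ sq_le_rpow_two_thirds_add _ _ (norm_nonneg v) (norm_nonneg u))

end InnerProductSpace

section Phi

variable {n : ℕ}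

theorem norm_Phi (x : EuclideanSpace ℝ (Fin n)) : ‖Phi x‖ = ‖x‖ ^ ((1 : ℝ) / 3) := by
  rcases (norm_nonneg x).eq_or_lt with hx | hx
  · simp [Phi, ← hx]
  rw [Phi, norm_smul, Real.norm_of_nonneg (by positivity)]
  nth_rewrite 2 [← Real.rpow_one ‖x‖]
  rw [← Real.rpow_add hx]
  norm_num

theorem norm_Phi_pow_three (x : EuclideanSpace ℝ (Fin n)) : ‖Phi x‖ ^ 3 = ‖x‖ := by
  rw [norm_Phi, ← Real.rpow_natCast, ← Real.rpow_mul (norm_nonneg x)]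
  norm_num

theorem norm_Phi_sq_smul_Phi (x : EuclideanSpace ℝ (Fin n)) : ‖Phi x‖ ^ 2 • Phi x = x := by
  rcases (norm_nonneg x).eq_or_lt with hx | hx
  · simp [Phi, norm_eq_zero.1 hx.symm]
  rw [norm_Phi, Phi, smul_smul, ← Real.rpow_natCast, ← Real.rpow_mul (norm_nonneg x),
    ← Real.rpow_add hx]
  norm_num

theorem inner_Phi_sub_nonneg (x y : EuclideanSpace ℝ (Fin n)) :
    0 ≤ ⟪Phi x - Phi y, x - y⟫_ℝ := by
  simpa only [norm_Phi_sq_smul_Phi] using inner_sub_norm_sq_smul_sub_nonneg (Phi x) (Phi y)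

theorem norm_sub_sq_le_inner_Phi (x y : EuclideanSpace ℝ (Fin n)) :
    ‖x - y‖ ^ 2 ≤ 3 * (‖x‖ + ‖y‖) ^ ((2 : ℝ) / 3) * ⟪Phi x - Phi y, x - y⟫_ℝ := by
  simpa only [norm_Phi_sq_smul_Phi, norm_Phi_pow_three] using
    norm_norm_sq_smul_sub_sq_le (Phi x) (Phi y)

theorem norm_sub_le_inner_Phi (x y : EuclideanSpace ℝ (Fin n)) :
    ‖x - y‖ ≤ (3 * ⟪Phi x - Phi y, x - y⟫_ℝ) ^ ((1 : ℝ) / 2) * (‖x‖ + ‖y‖) ^ ((1 : ℝ) / 3) := by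
  have hD := inner_Phi_sub_nonneg x y
  refine le_of_pow_le_pow_left₀ two_ne_zero (by positivity) ?_
  have hsqrt : ((3 * ⟪Phi x - Phi y, x - y⟫_ℝ) ^ ((1 : ℝ) / 2)) ^ 2 =
      3 * ⟪Phi x - Phi y, x - y⟫_ℝ := by
    rw [← Real.rpow_natCast, ← Real.rpow_mul (by positivity)]; norm_num
  have hcbrt : ((‖x‖ + ‖y‖) ^ ((1 : ℝ) / 3)) ^ 2 = (‖x‖ + ‖y‖) ^ ((2 : ℝ) / 3) := by
    rw [← Real.rpow_natCast, ← Real.rpow_mul (by positivity)]; norm_num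
  rw [mul_pow, hsqrt, hcbrt]
  linarith [norm_sub_sq_le_inner_Phi x y]

theorem measurable_Phi : Measurable (Phi (n := n)) := by
  unfold Phi; fun_prop

end Phi

section Holder

variable {α E : Type*} [MeasurableSpace α] {μ : Measure α} [NormedAddCommGroup E]

theorem eLpNorm_le_eLpNorm_one_rpow_mul_eLpNorm_rpow {F : α → E} {u v : α → ℝ}
    (hu : AEStronglyMeasurable u μ) (hv : AEStronglyMeasurable v μ)
    (h : ∀ᵐ x ∂μ, ‖F x‖ ≤ ‖u x‖ ^ ((1 : ℝ) / 2) * ‖v x‖ ^ ((1 : ℝ) / 3)) :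
    eLpNorm F (4 / 3) μ ≤ eLpNorm u 1 μ ^ ((1 : ℝ) / 2) * eLpNorm v (4 / 3) μ ^ ((1 : ℝ) / 3) := by
  have : ENNReal.HolderTriple 2 4 (4 / 3) := ⟨by
    rw [ENNReal.inv_div (by simp) (by simp)]
    refine (ENNReal.toReal_eq_toReal_iff' (by simp) (by simp [ENNReal.div_eq_top])).1 ?_
    rw [ENNReal.toReal_add (by simp) (by simp)]
    norm_num [ENNReal.toReal_div]⟩
  calc eLpNorm F (4 / 3) μ
      ≤ eLpNorm ((fun x => ‖u x‖ ^ ((1 : ℝ) / 2)) • fun x => ‖v x‖ ^ ((1 : ℝ) / 3)) (4 / 3) μ :=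
        eLpNorm_mono_ae_real h
    _ ≤ eLpNorm (fun x => ‖u x‖ ^ ((1 : ℝ) / 2)) 2 μ *
          eLpNorm (fun x => ‖v x‖ ^ ((1 : ℝ) / 3)) 4 μ :=
        eLpNorm_smul_le_mul_eLpNorm (hv.norm.aemeasurable.pow_const _).aestronglyMeasurable
          (hu.norm.aemeasurable.pow_const _).aestronglyMeasurable
    _ = eLpNorm u 1 μ ^ ((1 : ℝ) / 2) * eLpNorm v (4 / 3) μ ^ ((1 : ℝ) / 3) := by
        rw [eLpNorm_norm_rpow _ (by norm_num), eLpNorm_norm_rpow _ (by norm_num)]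
        congr 3
        · rw [ENNReal.ofReal_div_of_pos (by norm_num)]; simp [ENNReal.mul_inv_cancel]
        · rw [ENNReal.ofReal_div_of_pos (by norm_num)]; simp [div_eq_mul_inv]

end Holder

section Lp

variable {Ω : Type*} [MeasurableSpace Ω] {μ : Measure Ω} {n : ℕ}
  {f g : Ω → EuclideanSpace ℝ (Fin n)}

theorem memLp_Phi_comp {p : ℝ≥0∞} (hf : MemLp f p μ) : MemLp (fun x => Phi (f x)) (3 * p) μ := by
  have h := hf.norm_rpow_div 3⁻¹
  rw [ENNReal.div_eq_inv_mul, inv_inv, ENNReal.toReal_inv, ENNReal.toReal_ofNat] at h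
  refine (memLp_congr_norm ?_ h.1 (ae_of_all _ fun x => ?_)).2 h
  · exact (measurable_Phi.comp_aemeasurable hf.aemeasurable).aestronglyMeasurable
  · rw [norm_Phi, Real.norm_of_nonneg (by positivity), one_div]

theorem integrable_inner_Phi_sub (hf : MemLp f (4 / 3) μ) (hg : MemLp g (4 / 3) μ) :
    Integrable (fun x => ⟪Phi (f x) - Phi (g x), f x - g x⟫_ℝ) μ := by
  have : ENNReal.HolderTriple 4 (4 / 3) 1 := ⟨by
    rw [ENNReal.inv_div (by simp) (by simp), inv_one]
    refine (ENNReal.toReal_eq_toReal_iff' (by simp [ENNReal.div_eq_top]) (by simp)).1 ?_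
    rw [ENNReal.toReal_add (by simp) (by simp [ENNReal.div_eq_top])]
    norm_num [ENNReal.toReal_div]⟩
  have hPhi : MemLp (fun x => Phi (f x) - Phi (g x)) 4 μ := by
    have h43 : (3 : ℝ≥0∞) * (4 / 3) = 4 := ENNReal.mul_div_cancel (by simp) (by simp)
    exact h43 ▸ (memLp_Phi_comp hf).sub (memLp_Phi_comp hg)
  rw [← memLp_one_iff_integrable]
  exact hPhi.of_bilin (fun a b => ⟪a, b⟫_ℝ) 1 (hf.sub hg)
    (hPhi.1.inner (hf.sub hg).1) (ae_of_all _ fun x => by simpa using nnnorm_inner_le_nnnorm _ _)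

theorem eLpNorm_sub_sq_le_inner_Phi (hf : MemLp f (4 / 3) μ) (hg : MemLp g (4 / 3) μ) :
    eLpNorm (f - g) (4 / 3) μ ^ 2 ≤
      ENNReal.ofReal (3 * ∫ x, ⟪Phi (f x) - Phi (g x), f x - g x⟫_ℝ ∂μ) *
        (eLpNorm f (4 / 3) μ ^ ((2 : ℝ) / 3) + eLpNorm g (4 / 3) μ ^ ((2 : ℝ) / 3)) := by
  set D := fun x => ⟪Phi (f x) - Phi (g x), f x - g x⟫_ℝ
  have hD : Integrable D μ := integrable_inner_Phi_sub hf hg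
  have h3D : ∀ x, 0 ≤ 3 * D x := fun x => mul_nonneg zero_le_three (inner_Phi_sub_nonneg _ _)
  have hHolder := eLpNorm_le_eLpNorm_one_rpow_mul_eLpNorm_rpow (F := f - g)
    (u := fun x => 3 * D x) (v := fun x => ‖f x‖ + ‖g x‖)
    (hD.aestronglyMeasurable.const_mul 3) (hf.norm.add hg.norm).aestronglyMeasurable
    (ae_of_all _ fun x => by
      simpa [Real.norm_of_nonneg (h3D x), Real.norm_of_nonneg (add_nonneg (norm_nonneg (f x))
        (norm_nonneg (g x)))] using norm_sub_le_inner_Phi (f x) (g x))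
  have hu : eLpNorm (fun x => 3 * D x) 1 μ = ENNReal.ofReal (3 * ∫ x, D x ∂μ) := by
    rw [eLpNorm_one_eq_lintegral_enorm, ← integral_const_mul,
      ofReal_integral_eq_lintegral_ofReal (hD.const_mul 3) (ae_of_all _ h3D)]
    simp only [Real.enorm_of_nonneg (h3D _)]
  have hv : eLpNorm (fun x => ‖f x‖ + ‖g x‖) (4 / 3) μ ≤
      eLpNorm f (4 / 3) μ + eLpNorm g (4 / 3) μ := by
    have hp : (1 : ℝ≥0∞) ≤ 4 / 3 := by
      rw [ENNReal.le_div_iff_mul_le (by simp) (by simp)]; norm_num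
    exact (eLpNorm_add_le hf.norm.aestronglyMeasurable hg.norm.aestronglyMeasurable hp).trans_eq
      (by rw [eLpNorm_norm, eLpNorm_norm])
  calc eLpNorm (f - g) (4 / 3) μ ^ 2
      ≤ (ENNReal.ofReal (3 * ∫ x, D x ∂μ) ^ ((1 : ℝ) / 2) *
          (eLpNorm f (4 / 3) μ + eLpNorm g (4 / 3) μ) ^ ((1 : ℝ) / 3)) ^ 2 := by
        rw [← hu]
        gcongr
        exact hHolder.trans (by gcongr)
    _ = ENNReal.ofReal (3 * ∫ x, D x ∂μ) *
          (eLpNorm f (4 / 3) μ + eLpNorm g (4 / 3) μ) ^ ((2 : ℝ) / 3) := by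
        rw [mul_pow, ← ENNReal.rpow_natCast, ← ENNReal.rpow_natCast, ← ENNReal.rpow_mul,
          ← ENNReal.rpow_mul]
        norm_num
    _ ≤ _ := by
        gcongr
        exact ENNReal.rpow_add_le_add_rpow _ _ (by norm_num) (by norm_num)

end Lp

theorem duality_map_Lp_strong_monotonicity_general
    {Ω : Type*} [MeasurableSpace Ω] (μ : Measure Ω) (n : ℕ) :
    ∃ C : ℝ, 0 < C ∧ ∀ f g : Ω → EuclideanSpace ℝ (Fin n),
      MemLp f (4 / 3) μ → MemLp g (4 / 3) μ →
      C * (eLpNorm (f - g) (4 / 3) μ).toReal ^ 2 ≤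
        ((eLpNorm f (4 / 3) μ).toReal ^ ((2 : ℝ) / 3) +
          (eLpNorm g (4 / 3) μ).toReal ^ ((2 : ℝ) / 3)) *
          ∫ x, ⟪Phi (f x) - Phi (g x), f x - g x⟫_ℝ ∂μ := by
  refine ⟨1 / 3, by norm_num, fun f g hf hg => ?_⟩
  have hD : 0 ≤ ∫ x, ⟪Phi (f x) - Phi (g x), f x - g x⟫_ℝ ∂μ :=
    integral_nonneg fun x => inner_Phi_sub_nonneg _ _
  have hf23 := ENNReal.rpow_ne_top_of_nonneg (by norm_num : (0 : ℝ) ≤ 2 / 3) hf.eLpNorm_ne_top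
  have hg23 := ENNReal.rpow_ne_top_of_nonneg (by norm_num : (0 : ℝ) ≤ 2 / 3) hg.eLpNorm_ne_top
  have h := ENNReal.toReal_mono (by finiteness) (eLpNorm_sub_sq_le_inner_Phi hf hg)
  rw [ENNReal.toReal_pow, ENNReal.toReal_mul, ENNReal.toReal_ofReal (by positivity),
    ENNReal.toReal_add hf23 hg23, ← ENNReal.toReal_rpow, ← ENNReal.toReal_rpow] at h
  linarith

/-- There is `C > 0` such that for all `f, g ∈ L^{4/3}`,
`(‖f‖_{4/3}^{2/3} + ‖g‖_{4/3}^{2/3}) ∫ (Φ(f)-Φ(g))·(f-g) ≥ C ‖f-g‖_{4/3}²`. -/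
theorem duality_map_Lp_strong_monotonicity
    {Ω : Type*} [MeasurableSpace Ω] (μ : Measure Ω) (n : ℕ) (hn : 1 ≤ n) :
    ∃ C : ℝ, 0 < C ∧ ∀ f g : Ω → EuclideanSpace ℝ (Fin n),
      MemLp f (4 / 3) μ → MemLp g (4 / 3) μ →
      C * (eLpNorm (f - g) (4 / 3) μ).toReal ^ 2 ≤
        ((eLpNorm f (4 / 3) μ).toReal ^ ((2 : ℝ) / 3) +
          (eLpNorm g (4 / 3) μ).toReal ^ ((2 : ℝ) / 3)) *
          ∫ x, ⟪Phi (f x) - Phi (g x), f x - g x⟫_ℝ ∂μ :=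
  duality_map_Lp_strong_monotonicity_general μ n
end
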